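/- arXiv:1706.07948 — 3 statements merged into one kernel-verified Lean document; each statement's English description precedes it below -/
import Mathlib

section
/- Let A be a closed symmetric linear relation in a complex Hilbert space 𝔥 and let {𝓗,Γ} be an isometric boundary pair for A*, with T = dom Γ, Weyl family M, γ-field γ and A₀ = ker Γ₀. Fix λ, μ ∈ ℂ∖ℝ with λ ≠ μ. Then dom M(μ) ⊆ dom M(λ) if and only if ran γ(μ) ⊆ ran(A₀−λ). Moreover, if one of these equivalent conditions holds, then γ(λ)h = γ(μ)h + (λ−μ)(A₀−λ)⁻¹γ(μ)h for every h ∈ dom γ(μ) (here (A₀−λ)⁻¹ is a single-valued bounded operator on ran(A₀−λ) since A₀ is symmetric). -/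
noncomputable section

open Filter Topology

namespace BT

local notation "⟪" x ", " y "⟫" => @inner ℂ _ _ x y

section Ops
variable {α β γ' : Type*}

def domR (T : Set (α × β)) : Set α := {x | ∃ y, (x, y) ∈ T}
def ranR (T : Set (α × β)) : Set β := {y | ∃ x, (x, y) ∈ T}
def kerR [Zero β] (T : Set (α × β)) : Set α := {x | (x, (0 : β)) ∈ T}
def mulR [Zero α] (T : Set (α × β)) : Set β := {y | ((0 : α), y) ∈ T}
def invR (T : Set (α × β)) : Set (β × α) := {p | (p.2, p.1) ∈ T}
def compR (T₂ : Set (β × γ')) (T₁ : Set (α × β)) : Set (α × γ') :=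
  {p | ∃ y, (p.1, y) ∈ T₁ ∧ (y, p.2) ∈ T₂}
def csum [Add α] [Add β] (T₁ T₂ : Set (α × β)) : Set (α × β) :=
  {p | ∃ q ∈ T₁, ∃ r ∈ T₂, p = (q.1 + r.1, q.2 + r.2)}

def IsLinRel {M : Type*} [AddCommGroup M] [Module ℂ M] (s : Set M) : Prop :=
  ∃ p : Submodule ℂ M, (p : Set M) = s

def IsBddRel [Norm α] [Norm β] (T : Set (α × β)) : Prop :=
  ∃ C : ℝ, ∀ p ∈ T, ‖p.2‖ ≤ C * ‖p.1‖

def BddInv [NormedAddCommGroup α] (T : Set (α × α)) : Prop :=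
  (∀ v, ∃ p ∈ T, p.2 = v) ∧ (∀ p ∈ T, ∀ q ∈ T, p.2 = q.2 → p.1 = q.1) ∧
    ∃ C : ℝ, ∀ p ∈ T, ‖p.1‖ ≤ C * ‖p.2‖
end Ops

section Shifts
variable {α : Type*} [AddCommGroup α] [Module ℂ α]

def shiftSub (T : Set (α × α)) (l : ℂ) : Set (α × α) :=
  {p | ∃ q ∈ T, p = (q.1, q.2 - l • q.1)}
def shiftAdd (T : Set (α × α)) (l : ℂ) : Set (α × α) :=
  {p | ∃ q ∈ T, p = (q.1, q.2 + l • q.1)}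
def hatN (T : Set (α × α)) (l : ℂ) : Set (α × α) := {p ∈ T | p.2 = l • p.1}
def Nlam (T : Set (α × α)) (l : ℂ) : Set α := {f | (f, l • f) ∈ T}
def Hrel (A0s : Set (α × α)) (l : ℂ) : Set (α × (α × α)) :=
  {q | q.2 ∈ A0s ∧ q.2.2 - l • q.2.1 = q.1}
end Shifts

section InnerDefs
variable {E F : Type*} [NormedAddCommGroup E] [InnerProductSpace ℂ E]
  [NormedAddCommGroup F] [InnerProductSpace ℂ F]

def adjR (S : Set (F × E)) : Set (E × F) :=
  {p | ∀ q ∈ S, ⟪p.1, q.2⟫ = ⟪p.2, q.1⟫}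

def IsClosedSymRel (A : Set (E × E)) : Prop :=
  IsLinRel A ∧ IsClosed A ∧ A ⊆ adjR A

def kIP (p q : E × E) : ℂ := -Complex.I * ⟪q.1, p.2⟫ + Complex.I * ⟪q.2, p.1⟫

def kreinOrth (S : Set (E × E)) : Set (E × E) := {v | ∀ u ∈ S, kIP u v = 0}

def GreenPair (Γ : Set ((E × E) × (F × F))) : Prop :=
  ∀ p ∈ Γ, ∀ q ∈ Γ,
    ⟪q.1.1, p.1.2⟫ - ⟪q.1.2, p.1.1⟫ = ⟪q.2.1, p.2.2⟫ - ⟪q.2.2, p.2.1⟫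

def G0 (Γ : Set ((E × E) × (F × F))) : Set ((E × E) × F) := {p | ∃ h', (p.1, (p.2, h')) ∈ Γ}
def G1 (Γ : Set ((E × E) × (F × F))) : Set ((E × E) × F) := {p | ∃ h, (p.1, (h, p.2)) ∈ Γ}
def A0 (Γ : Set ((E × E) × (F × F))) : Set (E × E) := kerR (G0 Γ)
def A1 (Γ : Set ((E × E) × (F × F))) : Set (E × E) := kerR (G1 Γ)
def weyl (Γ : Set ((E × E) × (F × F))) (l : ℂ) : Set (F × F) :=
  {p | ∃ f : E, ((f, l • f), p) ∈ Γ}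
def gfield (Γ : Set ((E × E) × (F × F))) (l : ℂ) : Set (F × E) :=
  {p | ∃ h', ((p.2, l • p.2), (p.1, h')) ∈ Γ}

def kreinAdj (Γ : Set ((E × E) × (F × F))) : Set ((F × F) × (E × E)) :=
  {q | ∀ p ∈ Γ, kIP p.1 q.2 = kIP p.2 q.1}

def IsIsomPair (A : Set (E × E)) (Γ : Set ((E × E) × (F × F))) : Prop :=
  IsLinRel Γ ∧ domR Γ ⊆ adjR A ∧ GreenPair Γ
def IsDomDense (A : Set (E × E)) (Γ : Set ((E × E) × (F × F))) : Prop :=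
  closure (domR Γ) = adjR A
def IsABPair (A : Set (E × E)) (Γ : Set ((E × E) × (F × F))) : Prop :=
  IsIsomPair A Γ ∧ IsDomDense A Γ ∧ Dense (ranR (G0 Γ)) ∧ A0 Γ = adjR (A0 Γ)
def IsBPair (A : Set (E × E)) (Γ : Set ((E × E) × (F × F))) : Prop :=
  IsABPair A Γ ∧ ranR (G0 Γ) = Set.univ
def IsUnitaryPair (A : Set (E × E)) (Γ : Set ((E × E) × (F × F))) : Prop :=
  GreenPair Γ ∧ domR Γ ⊆ adjR A ∧ IsDomDense A Γ ∧ invR Γ = kreinAdj Γ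
def IsUnitaryBT (A : Set (E × E)) (Γ : Set ((E × E) × (F × F))) : Prop :=
  IsUnitaryPair A Γ ∧ mulR Γ = {0}
def IsOrdinaryBT (A : Set (E × E)) (Γ : Set ((E × E) × (F × F))) : Prop :=
  IsIsomPair A Γ ∧ mulR Γ = {0} ∧ domR Γ = adjR A ∧ ranR Γ = Set.univ

def Erel (Γ : Set ((E × E) × (F × F))) (m : ℂ) : Set (F × F) :=
  {p | ∃ u' v', (p.1, u') ∈ weyl Γ m ∧ (p.1, v') ∈ weyl Γ ((starRingEnd ℂ) m) ∧
        p.2 = (2 : ℂ)⁻¹ • (u' + v')}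

def triTransform (Γ : Set ((E × E) × (F × F))) (e : Set (F × F)) :
    Set ((E × E) × (F × F)) :=
  {q | ∃ h h' w, (q.1, (h, h')) ∈ Γ ∧ (h, w) ∈ e ∧ q.2 = (h, w + h')}

def formVal (l : ℂ) (u u' : F) : ℝ :=
  ((l - (starRingEnd ℂ) l)⁻¹ * (⟪u, u'⟫ - ⟪u', u⟫)).re

def FormClosable (l : ℂ) (Ms : Set (F × F)) : Prop :=
  ∀ u u' : ℕ → F, (∀ n, (u n, u' n) ∈ Ms) →
    Tendsto u atTop (nhds (0 : F)) →
    Tendsto (fun nm : ℕ × ℕ => formVal l (u nm.1 - u nm.2) (u' nm.1 - u' nm.2)) atTop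
      (nhds (0 : ℝ)) →
    Tendsto (fun n => formVal l (u n) (u' n)) atTop (nhds (0 : ℝ))

def formClosureDom (l : ℂ) (Ms : Set (F × F)) : Set F :=
  {v | ∃ u u' : ℕ → F, (∀ n, (u n, u' n) ∈ Ms) ∧ Tendsto u atTop (nhds v) ∧
    Tendsto (fun nm : ℕ × ℕ => formVal l (u nm.1 - u nm.2) (u' nm.1 - u' nm.2)) atTop
      (nhds (0 : ℝ))}

end InnerDefs

section CompleteDefs
variable {F : Type*} [NormedAddCommGroup F] [InnerProductSpace ℂ F] [CompleteSpace F]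

def IsNevFun (M₀ : ℂ → F →L[ℂ] F) : Prop :=
  DifferentiableOn ℂ M₀ {l : ℂ | l.im ≠ 0} ∧
  (∀ l : ℂ, l.im ≠ 0 → M₀ ((starRingEnd ℂ) l) = ContinuousLinearMap.adjoint (M₀ l)) ∧
  (∀ l : ℂ, 0 < l.im → ∀ u, 0 ≤ (⟪u, M₀ l u⟫).im)

def ImOp (Tb : F →L[ℂ] F) : F →L[ℂ] F :=
  ((2 : ℂ) * Complex.I)⁻¹ • (Tb - ContinuousLinearMap.adjoint Tb)

end CompleteDefs

variable {E F : Type*} [NormedAddCommGroup E] [InnerProductSpace ℂ E] [CompleteSpace E]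
  [NormedAddCommGroup F] [InnerProductSpace ℂ F] [CompleteSpace F]

lemma gamma_inj {Γ : Set ((E × E) × (F × F))} (green : GreenPair Γ)
    {l : ℂ} (hl : l.im ≠ 0) {u : E} {c : F}
    (hu : (((u, l • u) : E × E), (((0 : F), c) : F × F)) ∈ Γ) : u = 0 := by
  have hg := green _ hu _ hu
  simp only [inner_smul_left, inner_smul_right, inner_zero_left, inner_zero_right] at hg
  have hlc : l - (starRingEnd ℂ) l ≠ 0 := by
    intro h0
    apply hl
    have := congrArg Complex.im h0
    simp [Complex.sub_im, Complex.conj_im] at this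
    linarith
  have hz : (l - (starRingEnd ℂ) l) * ⟪u, u⟫ = 0 := by
    rw [sub_mul]
    linear_combination hg
  have : ⟪u, u⟫ = (0 : ℂ) := by
    rcases mul_eq_zero.mp hz with h0 | h0
    · exact absurd h0 hlc
    · exact h0
  exact inner_self_eq_zero.mp this

/-- domain inclusion for the Weyl family of an isometric boundary pair is
equivalent to a range inclusion for the γ-field, and the γ-field identity holds. -/
theorem statement0 (A : Set (E × E)) (Γ : Set ((E × E) × (F × F)))
    (hA : IsClosedSymRel A) (hΓ : IsIsomPair A Γ)
    (l m : ℂ) (hl : l.im ≠ 0) (hm : m.im ≠ 0) (hlm : l ≠ m) :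
    (domR (weyl Γ m) ⊆ domR (weyl Γ l) ↔
      ranR (gfield Γ m) ⊆ ranR (shiftSub (A0 Γ) l)) ∧
    (ranR (gfield Γ m) ⊆ ranR (shiftSub (A0 Γ) l) →
      ∀ (h : F) (fl fm g : E), (h, fl) ∈ gfield Γ l → (h, fm) ∈ gfield Γ m →
        (fm, g) ∈ invR (shiftSub (A0 Γ) l) → fl = fm + (l - m) • g) := by
  obtain ⟨⟨P, hP⟩, hdom, green⟩ := hΓ
  have hmem : ∀ x, x ∈ Γ ↔ x ∈ P := fun x => by rw [← hP]; rfl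
  have hlm' : l - m ≠ 0 := sub_ne_zero.mpr hlm
  constructor
  · constructor
    · -- dom M(m) ⊆ dom M(l) → ran γ(m) ⊆ ran (A0 - l)
      intro hincl f hf
      obtain ⟨h, h', hΓm⟩ := hf
      have hhm : h ∈ domR (weyl Γ m) := ⟨_, f, hΓm⟩
      obtain ⟨h'', f₂, hΓl⟩ := hincl hhm
      -- difference is in Γ with first boundary 0
      have hdiff : (((f₂ - f, l • f₂ - m • f) : E × E), (((0 : F), h'' - h') : F × F)) ∈ Γ := by
        have := P.sub_mem ((hmem _).mp hΓl) ((hmem _).mp hΓm)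
        have he : ((f₂, l • f₂), (h, h'')) - ((f, m • f), (h, h'))
            = (((f₂ - f, l • f₂ - m • f) : E × E), (((0 : F), h'' - h') : F × F)) := by
          simp [Prod.ext_iff]
        rw [he] at this
        exact (hmem _).mpr this
      -- scale by (l-m)⁻¹
      have hsc : ((((l - m)⁻¹ • (f₂ - f), (l - m)⁻¹ • (l • f₂ - m • f)) : E × E),
          (((0 : F), (l - m)⁻¹ • (h'' - h')) : F × F)) ∈ Γ := by
        have := P.smul_mem ((l - m)⁻¹) ((hmem _).mp hdiff)
        have he : ((l - m)⁻¹) • ((((f₂ - f, l • f₂ - m • f) : E × E),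
              (((0 : F), h'' - h') : F × F)))
            = ((((l - m)⁻¹ • (f₂ - f), (l - m)⁻¹ • (l • f₂ - m • f)) : E × E),
              (((0 : F), (l - m)⁻¹ • (h'' - h')) : F × F)) := by
          simp [Prod.ext_iff]
        rw [he] at this
        exact (hmem _).mpr this
      refine ⟨(l - m)⁻¹ • (f₂ - f),
        ((l - m)⁻¹ • (f₂ - f), (l - m)⁻¹ • (l • f₂ - m • f)), ⟨_, hsc⟩, ?_⟩
      refine Prod.ext rfl ?_
      show f = (l - m)⁻¹ • (l • f₂ - m • f) - l • ((l - m)⁻¹ • (f₂ - f))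
      have key : (l - m) • f = (l • f₂ - m • f) - l • (f₂ - f) := by module
      rw [smul_comm l ((l - m)⁻¹), ← smul_sub, ← key, inv_smul_smul₀ hlm']
    · -- ran γ(m) ⊆ ran (A0 - l) → dom M(m) ⊆ dom M(l)
      intro hincl h hh
      obtain ⟨h', f, hΓm⟩ := hh
      have hf : f ∈ ranR (gfield Γ m) := ⟨h, h', hΓm⟩
      obtain ⟨g, q, ⟨c, hqΓ⟩, hq⟩ := hincl hf
      have hq1 : g = q.1 := congrArg Prod.fst hq
      have hq2 : f = q.2 - l • q.1 := congrArg Prod.snd hq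
      -- q = (g, g'), f = g' - l • g
      have hsum : ((f + (l - m) • q.1, m • f + (l - m) • q.2),
          (h, h' + (l - m) • c)) ∈ Γ := by
        have := P.add_mem ((hmem _).mp hΓm)
          (P.smul_mem (l - m) ((hmem _).mp hqΓ))
        have he : ((f, m • f), (h, h')) + (l - m) • (((q.1, q.2) : E × E), (((0 : F), c) : F × F))
            = ((f + (l - m) • q.1, m • f + (l - m) • q.2), (h, h' + (l - m) • c)) := by
          simp [Prod.ext_iff]
        rw [he] at this
        exact (hmem _).mpr this
      have hkey : m • f + (l - m) • q.2 = l • (f + (l - m) • q.1) := by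
        have hg' : q.2 = f + l • q.1 := by
          rw [hq2]; simp [hq1]
        rw [hg']; module
      rw [hkey] at hsum
      exact ⟨h' + (l - m) • c, f + (l - m) • q.1, hsum⟩
  · -- the γ-field identity
    intro _ h fl fm g hfl hfm hg
    obtain ⟨a, hΓl⟩ := hfl
    obtain ⟨b, hΓm⟩ := hfm
    obtain ⟨q, ⟨c, hqΓ⟩, hq⟩ := hg
    have hq1 : g = q.1 := congrArg Prod.fst hq
    have hq2 : fm = q.2 - l • q.1 := congrArg Prod.snd hq
    -- hq1 : g = q.1, hq2 : fm = q.2 - l • q.1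
    have hg' : q.2 = fm + l • g := by rw [hq2, hq1]; abel
    have hz : (((fl - fm - (l - m) • g, l • (fl - fm - (l - m) • g)) : E × E),
        (((0 : F), a - b - (l - m) • c) : F × F)) ∈ Γ := by
      have := P.sub_mem (P.sub_mem ((hmem _).mp hΓl) ((hmem _).mp hΓm))
        (P.smul_mem (l - m) ((hmem _).mp hqΓ))
      have he : ((fl, l • fl), (h, a)) - ((fm, m • fm), (h, b))
            - (l - m) • (((q.1, q.2) : E × E), (((0 : F), c) : F × F))
          = (((fl - fm - (l - m) • q.1, l • fl - m • fm - (l - m) • q.2) : E × E),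
            (((0 : F), a - b - (l - m) • c) : F × F)) := by
        simp [Prod.ext_iff]
      rw [he] at this
      have he2 : (((fl - fm - (l - m) • q.1, l • fl - m • fm - (l - m) • q.2) : E × E),
            (((0 : F), a - b - (l - m) • c) : F × F))
          = (((fl - fm - (l - m) • g, l • (fl - fm - (l - m) • g)) : E × E),
            (((0 : F), a - b - (l - m) • c) : F × F)) := by
        rw [← hq1, hg']
        refine Prod.ext (Prod.ext rfl ?_) rfl
        show l • fl - m • fm - (l - m) • (fm + l • g) = l • (fl - fm - (l - m) • g)
        module
      rw [he2] at this
      exact (hmem _).mpr this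
    have hu0 : fl - fm - (l - m) • g = 0 := gamma_inj green hl hz
    rw [sub_sub] at hu0
    exact sub_eq_zero.mp hu0

end BT
end
end

section
/- Let {𝓗,Γ} be an isometric boundary pair for A* with γ-field γ, A₀ = ker Γ₀ and H(λ) as in the context, and let λ ∈ ℂ∖ℝ. Then: whenever h ∈ ran(A₀−λ) and (H(λ)h,(k,k')) ∈ Γ, there exists k'' ∈ 𝓗 with (h,k'') ∈ γ(conj λ)* and (k, k'−k'') ∈ mul Γ; in particular, if mul Γ₁ = {0}, then Γ₁∘H(λ) ⊆ γ(conj λ)*. Furthermore: (i) if γ(conj λ) is densely defined for some λ ∈ ℂ∖ℝ, then γ(conj λ)* is a closed single-valued operator, and if in addition mul Γ₁ = {0}, then Γ₁∘H(λ) is a closable operator; (ii) if A₀ is essentially selfadjoint, then γ(conj λ) is a closable operator for every λ ∈ ℂ∖ℝ; (iii) if A₀ is selfadjoint, then dom γ(conj λ)* = 𝔥 and γ(conj λ) is a bounded operator, for every λ ∈ ℂ∖ℝ. -/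
/-!
If `((f, f'), (0, m)) ∈ Γ`, i.e. `(f, f') ∈ A₀` with `Γ₁`-value `m`, then Green's identity
against `((g, λ̄ g), (u, u')) ∈ Γ` reads `⟪g, f' - λ f⟫ = ⟪u, m⟫`, that is,
`(f' - λ f, m) ∈ γ(λ̄)*`. Subtracting `((f, f'), (0, m))` from `((f, f'), (k, k'))` gives the
correction term in `mul Γ`. In particular `ran (A₀ - λ) ⊆ dom γ(λ̄)*`, and the rest is about
adjoints: `mul S*` is orthogonal to `dom S` and `mul (closure S)` to `dom S*`. If `A₀` is
essentially selfadjoint, `ran (A₀ - λ)` is dense, because its orthogonal complement consists of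
eigenvectors of the symmetric relation `A₀*` at the nonreal `λ̄`. If `A₀` is selfadjoint the
range is also closed, hence everything: then `γ(λ̄)*` is everywhere defined and the uniform
boundedness principle, applied to `h ↦ ⟪g, h⟫ / ‖u‖` for `(u, g) ∈ γ(λ̄)`, bounds `γ(λ̄)`.
-/

noncomputable section

open Filter Topology

namespace BT

local notation "⟪" x ", " y "⟫" => @inner ℂ _ _ x y

variable {E F : Type*} [NormedAddCommGroup E] [InnerProductSpace ℂ E] [CompleteSpace E]
  [NormedAddCommGroup F] [InnerProductSpace ℂ F] [CompleteSpace F]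

theorem IsBddRel.mulR_subset_zero {α β : Type*} [NormedAddCommGroup α] [NormedAddCommGroup β]
    {S : Set (α × β)} (hS : IsBddRel S) : mulR S ⊆ {0} := fun g hg => by
  obtain ⟨C, hC⟩ := hS
  simpa using hC _ hg

theorem zero_mem_mulR_closure {α β : Type*} [TopologicalSpace α] [TopologicalSpace β] [Zero α]
    [Zero β] {S : Set (α × β)} (h0 : ((0 : α), (0 : β)) ∈ S) : (0 : β) ∈ mulR (closure S) :=
  subset_closure h0

section Relations

variable {H K : Type*} [NormedAddCommGroup H] [InnerProductSpace ℂ H]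
  [NormedAddCommGroup K] [InnerProductSpace ℂ K]

def adjSubmodule (S : Set (K × H)) : Submodule ℂ (H × K) where
  carrier := adjR S
  add_mem' {a b} ha hb q hq := by
    simp only [Prod.fst_add, Prod.snd_add, inner_add_left, ha q hq, hb q hq]
  zero_mem' q _ := by simp
  smul_mem' c a ha q hq := by
    simp only [Prod.smul_fst, Prod.smul_snd, inner_smul_left, ha q hq]

theorem isClosed_adjR (S : Set (K × H)) : IsClosed (adjR S) := by
  have : adjR S = ⋂ q ∈ S, {p : H × K | ⟪p.1, q.2⟫ = ⟪p.2, q.1⟫} := by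
    ext p; simp [adjR]
  rw [this]
  exact isClosed_biInter fun q _ =>
    isClosed_eq (continuous_fst.inner continuous_const) (continuous_snd.inner continuous_const)

theorem inner_eq_of_mem_adjR_of_mem_closure {S : Set (K × H)} {p : H × K} (hp : p ∈ adjR S)
    {q : K × H} (hq : q ∈ closure S) : ⟪p.1, q.2⟫ = ⟪p.2, q.1⟫ :=
  closure_minimal (fun r hr => hp r hr)
    (isClosed_eq (continuous_const.inner continuous_snd) (continuous_const.inner continuous_fst)) hq

theorem mulR_adjR_eq_zero_of_dense {S : Set (K × H)} (hS : Dense (domR S)) :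
    mulR (adjR S) = {0} := by
  refine Set.eq_singleton_iff_unique_mem.mpr ⟨fun q _ => by simp, fun y hy => ?_⟩
  have hperp : domR S ⊆ {u | ⟪y, u⟫ = 0} := by
    rintro u ⟨g, hug⟩
    simpa using (hy (u, g) hug).symm
  have hclosed : IsClosed {u : K | ⟪y, u⟫ = 0} :=
    isClosed_eq (continuous_const.inner continuous_id) continuous_const
  exact inner_self_eq_zero.mp (closure_minimal hperp hclosed (hS y))

theorem inner_eq_zero_of_mem_domR_adjR_of_mem_mulR_closure {S : Set (K × H)} {x : H}
    (hx : x ∈ domR (adjR S)) {y : H} (hy : y ∈ mulR (closure S)) : ⟪x, y⟫ = 0 := by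
  obtain ⟨m, hm⟩ := hx
  simpa using inner_eq_of_mem_adjR_of_mem_closure hm hy

theorem isBddRel_of_domR_adjR_eq_univ [CompleteSpace H] {S : Set (K × H)}
    (hS : domR (adjR S) = Set.univ) : IsBddRel S := by
  have hdom : ∀ h : H, ∃ m : K, (h, m) ∈ adjR S := fun h =>
    Set.eq_univ_iff_forall.mp hS h
  let φ : {q : K × H // q ∈ S ∧ q.1 ≠ 0} → H →L[ℂ] ℂ :=
    fun q => innerSL ℂ ((‖q.1.1‖⁻¹ : ℂ) • q.1.2)
  have hφ : ∀ q, ‖φ q‖ = ‖q.1.1‖⁻¹ * ‖q.1.2‖ := fun q => by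
    simp [φ, innerSL_apply_norm, norm_smul]
  -- `⟪g, h⟫` is the conjugate of `⟪m, u⟫`, which is at most `‖m‖ * ‖u‖`
  have hpointwise : ∀ h : H, ∃ C : ℝ, ∀ q, ‖φ q h‖ ≤ C := fun h => by
    obtain ⟨m, hm⟩ := hdom h
    refine ⟨‖m‖, fun ⟨⟨u, g⟩, hq, hu⟩ => ?_⟩
    have hgh : ‖⟪g, h⟫‖ = ‖⟪m, u⟫‖ := by rw [← inner_conj_symm, hm _ hq, RCLike.norm_conj]
    have hu' : 0 < ‖u‖ := norm_pos_iff.mpr hu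
    calc ‖φ ⟨(u, g), hq, hu⟩ h‖ = ‖u‖⁻¹ * ‖⟪m, u⟫‖ := by simp [φ, hgh]
      _ ≤ ‖u‖⁻¹ * (‖m‖ * ‖u‖) := by gcongr; exact norm_inner_le_norm m u
      _ = ‖m‖ := by field_simp
  obtain ⟨C, hC⟩ := banach_steinhaus hpointwise
  refine ⟨max C 0, fun ⟨u, g⟩ hq => ?_⟩
  rcases eq_or_ne u 0 with rfl | hu
  · obtain ⟨m, hm⟩ := hdom g
    simpa [inner_self_eq_zero.mp ((hm _ hq).trans (inner_zero_right m))] using hm _ hq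
  · have hu' : 0 < ‖u‖ := norm_pos_iff.mpr hu
    have hg := hC ⟨(u, g), hq, hu⟩
    rw [hφ, inv_mul_le_iff₀ hu'] at hg
    calc ‖g‖ ≤ ‖u‖ * C := hg
      _ ≤ max C 0 * ‖u‖ := by rw [mul_comm]; gcongr; exact le_max_left C 0

theorem eq_zero_of_inner_smul_self_eq {c : ℂ} (hc : c.im ≠ 0) {f : H}
    (h : ⟪f, c • f⟫ = ⟪c • f, f⟫) : f = 0 := by
  rw [inner_smul_right, inner_smul_left] at h
  refine inner_self_eq_zero.mp ((mul_eq_mul_right_iff.mp h).resolve_left fun hc' => hc ?_)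
  exact (Complex.conj_eq_iff_im.mp hc'.symm)

theorem abs_im_mul_norm_le_norm_sub_smul (l : ℂ) {e e' : H} (hsym : ⟪e, e'⟫ = ⟪e', e⟫) :
    |l.im| * ‖e‖ ≤ ‖e' - l • e‖ := by
  rcases eq_or_ne e 0 with rfl | he
  · simp
  have hre : (⟪e, e'⟫).im = 0 := Complex.conj_eq_iff_im.mp (by rw [inner_conj_symm, hsym])
  have him : (⟪e, e' - l • e⟫).im = -(l.im * ‖e‖ ^ 2) := by
    rw [inner_sub_right, inner_smul_right, inner_self_eq_norm_sq_to_K]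
    simp [hre, ← Complex.ofReal_pow]
  have hcs : |l.im| * ‖e‖ ^ 2 ≤ ‖e‖ * ‖e' - l • e‖ := by
    calc |l.im| * ‖e‖ ^ 2 = |(⟪e, e' - l • e⟫).im| := by rw [him, abs_neg, abs_mul, abs_sq]
      _ ≤ ‖⟪e, e' - l • e⟫‖ := Complex.abs_im_le_norm _
      _ ≤ ‖e‖ * ‖e' - l • e‖ := norm_inner_le_norm e _
  have he' : 0 < ‖e‖ := norm_pos_iff.mpr he
  nlinarith

theorem norm_le_mul_norm_sub_smul {l : ℂ} (hl : l.im ≠ 0) {e e' : H}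
    (hsym : ⟪e, e'⟫ = ⟪e', e⟫) :
    ‖(e, e')‖ ≤ (1 + (1 + ‖l‖) / |l.im|) * ‖e' - l • e‖ := by
  have ha : 0 < |l.im| := abs_pos.mpr hl
  set y := e' - l • e
  have he : ‖e‖ ≤ ‖y‖ / |l.im| := by
    rw [le_div_iff₀ ha, mul_comm]; exact abs_im_mul_norm_le_norm_sub_smul l hsym
  have he' : ‖e'‖ ≤ ‖y‖ + ‖l‖ * ‖e‖ := by
    calc ‖e'‖ = ‖y + l • e‖ := by rw [sub_add_cancel]
      _ ≤ ‖y‖ + ‖l‖ * ‖e‖ := (norm_add_le _ _).trans_eq (by rw [norm_smul])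
  have hK : (1 + (1 + ‖l‖) / |l.im|) * ‖y‖ = ‖y‖ + ‖y‖ / |l.im| + ‖l‖ * (‖y‖ / |l.im|) := by
    ring
  have hy : 0 ≤ ‖y‖ / |l.im| := by positivity
  rw [Prod.norm_mk, hK]
  refine max_le (by nlinarith [norm_nonneg y, mul_nonneg (norm_nonneg l) hy]) ?_
  nlinarith [mul_le_mul_of_nonneg_left he (norm_nonneg l)]

theorem mem_ranR_shiftSub {T : Set (H × H)} {l : ℂ} {y : H} :
    y ∈ ranR (shiftSub T l) ↔ ∃ q ∈ T, q.2 - l • q.1 = y := by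
  constructor
  · rintro ⟨x, q, hq, hxy⟩
    exact ⟨q, hq, (congrArg Prod.snd hxy).symm⟩
  · rintro ⟨q, hq, rfl⟩
    exact ⟨q.1, q, hq, rfl⟩

theorem eq_zero_of_forall_inner_ranR_shiftSub {T : Set (H × H)} (hT : closure T = adjR T)
    {l : ℂ} (hl : l.im ≠ 0) {f : H} (hf : ∀ x ∈ ranR (shiftSub T l), ⟪x, f⟫ = 0) : f = 0 := by
  have hadj : (f, (starRingEnd ℂ) l • f) ∈ adjR T := fun q hq => by
    have h := hf _ (mem_ranR_shiftSub.mpr ⟨q, hq, rfl⟩)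
    rw [inner_sub_left, inner_smul_left, sub_eq_zero] at h
    rw [inner_smul_left, Complex.conj_conj, ← inner_conj_symm, h, map_mul, Complex.conj_conj,
      inner_conj_symm]
  refine eq_zero_of_inner_smul_self_eq (c := (starRingEnd ℂ) l) (by simpa using hl) ?_
  exact inner_eq_of_mem_adjR_of_mem_closure hadj (hT ▸ hadj)

/-- `T - λ` is bounded below on the symmetric relation `T`, so its range is closed; the
orthogonal complement of the range is `N(T*, conj λ) = {0}`. -/
theorem ranR_shiftSub_eq_univ [CompleteSpace H] {T : Set (H × H)} (hT : T = adjR T) {l : ℂ}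
    (hl : l.im ≠ 0) : ranR (shiftSub T l) = Set.univ := by
  let P := adjSubmodule T
  have hP : (P : Set (H × H)) = T := hT.symm
  have : CompleteSpace P := (isClosed_adjR T).completeSpace_coe
  let L : P →L[ℂ] H :=
    (ContinuousLinearMap.snd ℂ H H - l • ContinuousLinearMap.fst ℂ H H).comp P.subtypeL
  let Q : Submodule ℂ H := LinearMap.range (L : P →ₗ[ℂ] H)
  have hrange : ranR (shiftSub T l) = Q := by
    ext y
    rw [mem_ranR_shiftSub, ← hP]
    simp [Q, L]
  let K : NNReal := ⟨1 + (1 + ‖l‖) / |l.im|, by positivity⟩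
  have hbound : ∀ p : P, ‖p‖ ≤ K * ‖L p‖ := fun p =>
    norm_le_mul_norm_sub_smul hl (p.2 p (hP ▸ p.2))
  have hclosed : IsClosed (Q : Set H) :=
    (L.antilipschitz_of_bound hbound).isClosed_range L.uniformContinuous
  have : CompleteSpace Q := hclosed.completeSpace_coe
  have horth : Qᗮ = ⊥ := by
    refine (Submodule.eq_bot_iff _).mpr fun v hv => ?_
    have hTclosed : closure T = adjR T := ((hT ▸ isClosed_adjR T : IsClosed T).closure_eq).trans hT
    refine eq_zero_of_forall_inner_ranR_shiftSub hTclosed hl ?_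
    intro x hx
    rw [hrange] at hx
    exact (Submodule.mem_orthogonal _ v).mp hv x hx
  rw [hrange, Submodule.orthogonal_eq_bot_iff.mp horth, Submodule.top_coe]

variable {Γ : Set ((H × H) × (K × K))}

theorem inner_sub_smul_eq_of_greenPair (hG : GreenPair Γ) {l : ℂ} {p : H × H} {m : K}
    (hp : (p, ((0 : K), m)) ∈ Γ) {g : H} {u u' : K}
    (hq : ((g, (starRingEnd ℂ) l • g), (u, u')) ∈ Γ) : ⟪g, p.2 - l • p.1⟫ = ⟪u, m⟫ := by
  have h := hG _ hp _ hq
  simp only [inner_sub_right, inner_smul_left, inner_smul_right, inner_zero_right,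
    Complex.conj_conj] at h ⊢
  linear_combination h

theorem sub_smul_mem_adjR_gfield (hG : GreenPair Γ) {l : ℂ} {p : H × H} {m : K}
    (hp : (p, ((0 : K), m)) ∈ Γ) : (p.2 - l • p.1, m) ∈ adjR (gfield Γ ((starRingEnd ℂ) l)) := by
  rintro ⟨u, g⟩ ⟨u', hq⟩
  rw [← inner_conj_symm, inner_sub_smul_eq_of_greenPair hG hp hq, inner_conj_symm]

theorem ranR_shiftSub_A0_subset_domR_adjR_gfield (hG : GreenPair Γ) (l : ℂ) :
    ranR (shiftSub (A0 Γ) l) ⊆ domR (adjR (gfield Γ ((starRingEnd ℂ) l))) := by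
  intro x hx
  obtain ⟨p, ⟨m, hm⟩, rfl⟩ := mem_ranR_shiftSub.mp hx
  exact ⟨m, sub_smul_mem_adjR_gfield hG hm⟩

theorem mulR_closure_gfield_subset_zero (hG : GreenPair Γ) (hA0 : closure (A0 Γ) = adjR (A0 Γ))
    {l : ℂ} (hl : l.im ≠ 0) : mulR (closure (gfield Γ ((starRingEnd ℂ) l))) ⊆ {0} :=
  fun _ hy => eq_zero_of_forall_inner_ranR_shiftSub hA0 hl fun _ hx =>
    inner_eq_zero_of_mem_domR_adjR_of_mem_mulR_closure
      (ranR_shiftSub_A0_subset_domR_adjR_gfield hG l hx) hy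

theorem exists_mem_adjR_gfield_of_mem_Hrel (hΓ : IsLinRel Γ) (hG : GreenPair Γ) {l : ℂ} {h : H}
    {p : H × H} {k k' : K} (hH : (h, p) ∈ Hrel (A0 Γ) l) (hp : (p, (k, k')) ∈ Γ) :
    ∃ k'', (h, k'') ∈ adjR (gfield Γ ((starRingEnd ℂ) l)) ∧ (k, k' - k'') ∈ mulR Γ := by
  obtain ⟨P, rfl⟩ := hΓ
  obtain ⟨⟨m, hm⟩, hh : p.2 - l • p.1 = h⟩ := hH
  subst hh
  exact ⟨m, sub_smul_mem_adjR_gfield hG hm, by simpa [mulR] using P.sub_mem hp hm⟩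

theorem compR_G1_Hrel_subset_adjR_gfield (hΓ : IsLinRel Γ) (hG : GreenPair Γ)
    (hmul : mulR (G1 Γ) = {0}) (l : ℂ) :
    compR (G1 Γ) (Hrel (A0 Γ) l) ⊆ adjR (gfield Γ ((starRingEnd ℂ) l)) := by
  rintro ⟨h, k'⟩ ⟨p, hH, k, hp⟩
  obtain ⟨k'', hadj, hk⟩ := exists_mem_adjR_gfield_of_mem_Hrel hΓ hG hH hp
  have : k' - k'' ∈ mulR (G1 Γ) := ⟨k, hk⟩
  rw [hmul, Set.mem_singleton_iff, sub_eq_zero] at this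
  exact this ▸ hadj

end Relations

theorem statement2_general (A : Set (E × E)) (Γ : Set ((E × E) × (F × F)))
    (hΓ : IsIsomPair A Γ) :
    -- main inclusion (with a multivalued correction term)
    (∀ l : ℂ, l.im ≠ 0 →
       ∀ (h : E) (p : E × E) (k k' : F), (h, p) ∈ Hrel (A0 Γ) l → (p, (k, k')) ∈ Γ →
         ∃ k'' : F, (h, k'') ∈ adjR (gfield Γ ((starRingEnd ℂ) l)) ∧
           (k, k' - k'') ∈ mulR Γ) ∧
    -- in particular, if `mul Γ₁ = {0}`, then `Γ₁ ∘ H(λ) ⊆ γ(conj λ)*`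
    (∀ l : ℂ, l.im ≠ 0 → mulR (G1 Γ) = {(0 : F)} →
       compR (G1 Γ) (Hrel (A0 Γ) l) ⊆ adjR (gfield Γ ((starRingEnd ℂ) l))) ∧
    -- (i)
    (∀ l : ℂ, l.im ≠ 0 → Dense (domR (gfield Γ ((starRingEnd ℂ) l))) →
       IsClosed (adjR (gfield Γ ((starRingEnd ℂ) l))) ∧
       mulR (adjR (gfield Γ ((starRingEnd ℂ) l))) = {(0 : F)} ∧
       (mulR (G1 Γ) = {(0 : F)} →
         mulR (closure (compR (G1 Γ) (Hrel (A0 Γ) l))) = {(0 : F)})) ∧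
    -- (ii)
    (closure (A0 Γ) = adjR (A0 Γ) →
       ∀ l : ℂ, l.im ≠ 0 → mulR (closure (gfield Γ ((starRingEnd ℂ) l))) = {(0 : E)}) ∧
    -- (iii)
    (A0 Γ = adjR (A0 Γ) →
       ∀ l : ℂ, l.im ≠ 0 →
         domR (adjR (gfield Γ ((starRingEnd ℂ) l))) = Set.univ ∧
         mulR (gfield Γ ((starRingEnd ℂ) l)) ⊆ {(0 : E)} ∧
         IsBddRel (gfield Γ ((starRingEnd ℂ) l))) := by
  obtain ⟨hlin, -, hG⟩ := hΓ
  have hzero : (((0 : E), (0 : E)), ((0 : F), (0 : F))) ∈ Γ := by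
    obtain ⟨P, rfl⟩ := hlin
    exact P.zero_mem
  refine ⟨fun _ _ _ _ _ _ => exists_mem_adjR_gfield_of_mem_Hrel hlin hG,
    fun l _ hmul => compR_G1_Hrel_subset_adjR_gfield hlin hG hmul l,
    fun l _ hdense => ⟨isClosed_adjR _, mulR_adjR_eq_zero_of_dense hdense, fun hmul => ?_⟩,
    fun hA0 l hl => ?_, fun hA0 l hl => ?_⟩
  · have hcl := closure_minimal (compR_G1_Hrel_subset_adjR_gfield hlin hG hmul l) (isClosed_adjR _)
    refine Set.Subset.antisymm (fun y hy => mulR_adjR_eq_zero_of_dense hdense ▸ hcl hy) ?_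
    have h0 : ((0 : E), (0 : F)) ∈ compR (G1 Γ) (Hrel (A0 Γ) l) :=
      ⟨0, ⟨⟨0, hzero⟩, by simp⟩, 0, hzero⟩
    exact Set.singleton_subset_iff.mpr (zero_mem_mulR_closure h0)
  · refine Set.Subset.antisymm (mulR_closure_gfield_subset_zero hG hA0 hl) ?_
    have h0 : ((0 : F), (0 : E)) ∈ gfield Γ ((starRingEnd ℂ) l) := ⟨0, by simpa using hzero⟩
    exact Set.singleton_subset_iff.mpr (zero_mem_mulR_closure h0)
  · have hdom : domR (adjR (gfield Γ ((starRingEnd ℂ) l))) = Set.univ :=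
      Set.eq_univ_of_univ_subset
        (ranR_shiftSub_eq_univ hA0 hl ▸ ranR_shiftSub_A0_subset_domR_adjR_gfield hG l)
    have hbdd := isBddRel_of_domR_adjR_eq_univ hdom
    exact ⟨hdom, hbdd.mulR_subset_zero, hbdd⟩

/-- the relation `Γ₁ ∘ H(λ)` and the adjoint of the γ-field at `conj λ`
for an isometric boundary pair; closability and boundedness consequences. -/
theorem statement2 (A : Set (E × E)) (Γ : Set ((E × E) × (F × F)))
    (hA : IsClosedSymRel A) (hΓ : IsIsomPair A Γ) :
    -- main inclusion (with a multivalued correction term)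
    (∀ l : ℂ, l.im ≠ 0 →
       ∀ (h : E) (p : E × E) (k k' : F), (h, p) ∈ Hrel (A0 Γ) l → (p, (k, k')) ∈ Γ →
         ∃ k'' : F, (h, k'') ∈ adjR (gfield Γ ((starRingEnd ℂ) l)) ∧
           (k, k' - k'') ∈ mulR Γ) ∧
    -- in particular, if `mul Γ₁ = {0}`, then `Γ₁ ∘ H(λ) ⊆ γ(conj λ)*`
    (∀ l : ℂ, l.im ≠ 0 → mulR (G1 Γ) = {(0 : F)} →
       compR (G1 Γ) (Hrel (A0 Γ) l) ⊆ adjR (gfield Γ ((starRingEnd ℂ) l))) ∧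
    -- (i)
    (∀ l : ℂ, l.im ≠ 0 → Dense (domR (gfield Γ ((starRingEnd ℂ) l))) →
       IsClosed (adjR (gfield Γ ((starRingEnd ℂ) l))) ∧
       mulR (adjR (gfield Γ ((starRingEnd ℂ) l))) = {(0 : F)} ∧
       (mulR (G1 Γ) = {(0 : F)} →
         mulR (closure (compR (G1 Γ) (Hrel (A0 Γ) l))) = {(0 : F)})) ∧
    -- (ii)
    (closure (A0 Γ) = adjR (A0 Γ) →
       ∀ l : ℂ, l.im ≠ 0 → mulR (closure (gfield Γ ((starRingEnd ℂ) l))) = {(0 : E)}) ∧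
    -- (iii)
    (A0 Γ = adjR (A0 Γ) →
       ∀ l : ℂ, l.im ≠ 0 →
         domR (adjR (gfield Γ ((starRingEnd ℂ) l))) = Set.univ ∧
         mulR (gfield Γ ((starRingEnd ℂ) l)) ⊆ {(0 : E)} ∧
         IsBddRel (gfield Γ ((starRingEnd ℂ) l))) :=
  statement2_general A Γ hΓ

end BT
end
end

section
/- Let 𝔥 and 𝓗 be complex Hilbert spaces and let U : 𝔥 ⊕ 𝓗 → 𝔥 ⊕ 𝓗 be a unitary operator, written in block form U = [[T, F], [G, H]] with T ∈ 𝓑(𝔥), F ∈ 𝓑(𝓗,𝔥), G ∈ 𝓑(𝔥,𝓗), H ∈ 𝓑(𝓗). Then the following four conditions are equivalent: (i) ran(I−H) + ran G = 𝓗; (ii) ran(I−H*) + ran F* = 𝓗; (iii) ran(I−H) = 𝓗; (iv) ran(I−H*) = 𝓗. -/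
/-!
Unitarity gives `G G* + H H* = I`, whence `‖(I - H*) w‖² + ‖G* w‖² = 2 Re ⟪w, (I - H) w⟫`.
If `ran (I - H) + ran G = 𝓗`, the open mapping theorem bounds the adjoint of
`(u, v) ↦ (I - H) u + G v` from below, so `Re (I - H)` is coercive; a coercive operator has
closed range and trivial orthogonal complement of its range, so `I - H` and `I - H*`
(which has the same real part) are onto. Condition (ii) is handled in the same way with
`(H*, F*)` in place of `(H, G)`, using `F* F + H* H = I`. The remaining implications are trivial.
-/

noncomputable section

open Filter Topology

namespace BT

local notation "⟪" x ", " y "⟫" => @inner ℂ _ _ x y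

section Coercive

open ContinuousLinearMap

variable {𝕜 E F : Type*} [RCLike 𝕜] [NormedAddCommGroup E] [InnerProductSpace 𝕜 E]
  [NormedAddCommGroup F] [InnerProductSpace 𝕜 F]

theorem re_inner_adjoint_apply_self [CompleteSpace F] (A : F →L[𝕜] F) (u : F) :
    RCLike.re (inner 𝕜 u (adjoint A u)) = RCLike.re (inner 𝕜 u (A u)) := by
  rw [adjoint_inner_right, inner_re_symm]

theorem norm_le_norm_apply_of_re_inner_coercive (A : F →L[𝕜] F) {c : ℝ}
    (hA : ∀ u, c * ‖u‖ ^ 2 ≤ RCLike.re (inner 𝕜 u (A u))) (u : F) :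
    c * ‖u‖ ≤ ‖A u‖ := by
  rcases eq_or_ne u 0 with rfl | hu
  · simp
  refine le_of_mul_le_mul_right ?_ (norm_pos_iff.mpr hu)
  calc c * ‖u‖ * ‖u‖ = c * ‖u‖ ^ 2 := by ring
    _ ≤ RCLike.re (inner 𝕜 u (A u)) := hA u
    _ ≤ ‖u‖ * ‖A u‖ := re_inner_le_norm u (A u)
    _ = ‖A u‖ * ‖u‖ := mul_comm _ _

theorem surjective_of_re_inner_coercive [CompleteSpace F] (A : F →L[𝕜] F) {c : ℝ} (hc : 0 < c)
    (hA : ∀ u, c * ‖u‖ ^ 2 ≤ RCLike.re (inner 𝕜 u (A u))) :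
    Function.Surjective A := by
  have hanti : AntilipschitzWith (Real.toNNReal c⁻¹) A :=
    A.antilipschitz_of_bound fun u => by
      rw [Real.coe_toNNReal _ (inv_nonneg.mpr hc.le), ← div_eq_inv_mul, le_div_iff₀' hc]
      exact norm_le_norm_apply_of_re_inner_coercive A hA u
  have hclosed : IsClosed (A.range : Set F) := by
    rw [LinearMap.coe_range]
    exact hanti.isClosed_range A.uniformContinuous
  have := hclosed.completeSpace_coe
  have hperp : A.rangeᗮ = ⊥ := by
    refine (Submodule.eq_bot_iff _).mpr fun w hw => ?_
    have hAw : inner 𝕜 w (A w) = 0 :=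
      (Submodule.mem_orthogonal' _ _).mp hw _ ⟨w, rfl⟩
    have : c * ‖w‖ ^ 2 ≤ 0 := by simpa [hAw] using hA w
    have : ‖w‖ ^ 2 ≤ 0 := nonpos_of_mul_nonpos_right this hc
    simpa using this
  exact LinearMap.range_eq_top.mp (Submodule.orthogonal_eq_bot_iff.mp hperp)

theorem re_inner_sub_adjoint_apply [CompleteSpace F] (H : F →L[𝕜] F) (u : F) :
    RCLike.re (inner 𝕜 u (u - adjoint H u)) = RCLike.re (inner 𝕜 u (u - H u)) := by
  rw [inner_sub_right, inner_sub_right, map_sub, map_sub, re_inner_adjoint_apply_self]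

theorem surjective_sub_of_re_inner_coercive [CompleteSpace F] (H : F →L[𝕜] F) {c : ℝ}
    (hc : 0 < c) (hH : ∀ u, c * ‖u‖ ^ 2 ≤ RCLike.re (inner 𝕜 u (u - H u))) :
    Function.Surjective (fun u : F => u - H u) :=
  surjective_of_re_inner_coercive (.id 𝕜 F - H) hc hH

theorem exists_mul_norm_sq_le_of_surjective_coprod [CompleteSpace E] [CompleteSpace F]
    {E' : Type*} [NormedAddCommGroup E'] [InnerProductSpace 𝕜 E'] [CompleteSpace E']
    (A : E' →L[𝕜] F) (B : E →L[𝕜] F) (hAB : Function.Surjective (A.coprod B)) :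
    ∃ c > 0, ∀ w, c * ‖w‖ ^ 2 ≤ ‖adjoint A w‖ ^ 2 + ‖adjoint B w‖ ^ 2 := by
  -- Open mapping: `w = A x + B y` with `‖(x, y)‖ ≤ C ‖w‖`,
  -- and then `‖w‖² = Re ⟪A† w, x⟫ + Re ⟪B† w, y⟫`.
  obtain ⟨C, hC, hpre⟩ := exists_preimage_norm_le _ hAB
  refine ⟨(2 * C ^ 2)⁻¹, by positivity, fun w => ?_⟩
  obtain ⟨x, hx, hxw⟩ := hpre w
  rw [coprod_apply] at hx
  set a := ‖adjoint A w‖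
  set b := ‖adjoint B w‖
  have hw : ‖w‖ ^ 2 ≤ C * (a + b) * ‖w‖ :=
    calc ‖w‖ ^ 2 = RCLike.re (inner 𝕜 w (A x.1 + B x.2)) := by rw [hx, inner_self_eq_norm_sq]
      _ = RCLike.re (inner 𝕜 (adjoint A w) x.1) + RCLike.re (inner 𝕜 (adjoint B w) x.2) := by
        rw [inner_add_right, map_add, adjoint_inner_left, adjoint_inner_left]
      _ ≤ a * ‖x‖ + b * ‖x‖ := by
        gcongr
        · exact (re_inner_le_norm _ _).trans (by gcongr; exact norm_fst_le x)
        · exact (re_inner_le_norm _ _).trans (by gcongr; exact norm_snd_le x)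
      _ ≤ C * (a + b) * ‖w‖ := by nlinarith [norm_nonneg (adjoint A w), norm_nonneg (adjoint B w)]
  rw [inv_mul_le_iff₀ (by positivity)]
  nlinarith [sq_nonneg (‖w‖ - C * (a + b)), sq_nonneg (a - b), norm_nonneg w,
    norm_nonneg (adjoint A w), norm_nonneg (adjoint B w)]

theorem norm_sub_adjoint_sq_add_norm_adjoint_sq [CompleteSpace E] [CompleteSpace F]
    (H : F →L[𝕜] F) (G : E →L[𝕜] F) (hGH : G ∘L adjoint G + H ∘L adjoint H = .id 𝕜 F) (w : F) :
    ‖w - adjoint H w‖ ^ 2 + ‖adjoint G w‖ ^ 2 = 2 * RCLike.re (inner 𝕜 w (w - H w)) := by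
  have hsum : ‖adjoint G w‖ ^ 2 + ‖adjoint H w‖ ^ 2 = ‖w‖ ^ 2 := by
    have hw : G (adjoint G w) + H (adjoint H w) = w := by
      simpa using congr($hGH w)
    rw [← inner_self_eq_norm_sq (𝕜 := 𝕜), ← inner_self_eq_norm_sq (𝕜 := 𝕜),
      ← inner_self_eq_norm_sq (𝕜 := 𝕜) w, adjoint_inner_left, adjoint_inner_left, ← map_add,
      ← inner_add_right, hw]
  rw [norm_sub_sq (𝕜 := 𝕜), re_inner_adjoint_apply_self, inner_sub_right, map_sub,
    inner_self_eq_norm_sq]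
  linarith

theorem exists_re_inner_coercive_of_setOf_sub_add_eq_univ [CompleteSpace E] [CompleteSpace F]
    (H : F →L[𝕜] F) (G : E →L[𝕜] F) (hGH : G ∘L adjoint G + H ∘L adjoint H = .id 𝕜 F)
    (hsurj : {w : F | ∃ (u : F) (v : E), w = (u - H u) + G v} = Set.univ) :
    ∃ c > 0, ∀ w, c * ‖w‖ ^ 2 ≤ RCLike.re (inner 𝕜 w (w - H w)) := by
  have hcoprod : Function.Surjective ((.id 𝕜 F - H).coprod G) := fun w => by
    obtain ⟨u, v, rfl⟩ : w ∈ {w : F | ∃ (u : F) (v : E), w = (u - H u) + G v} := hsurj ▸ trivial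
    exact ⟨(u, v), rfl⟩
  obtain ⟨c, hc, hcw⟩ := exists_mul_norm_sq_le_of_surjective_coprod _ _ hcoprod
  refine ⟨c / 2, by positivity, fun w => ?_⟩
  have := hcw w
  rw [map_sub, adjoint_id, sub_apply, id_apply,
    norm_sub_adjoint_sq_add_norm_adjoint_sq H G hGH] at this
  linarith

theorem setOf_sub_add_eq_univ_of_surjective (H : F →L[𝕜] F) (G : E →L[𝕜] F)
    (hH : Function.Surjective (fun u : F => u - H u)) :
    {w : F | ∃ (u : F) (v : E), w = (u - H u) + G v} = Set.univ :=
  Set.eq_univ_of_forall fun w => by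
    obtain ⟨u, rfl⟩ := hH w
    exact ⟨u, 0, by simp⟩

end Coercive

variable {E F : Type*} [NormedAddCommGroup E] [InnerProductSpace ℂ E] [CompleteSpace E]
  [NormedAddCommGroup F] [InnerProductSpace ℂ F] [CompleteSpace F]

open ContinuousLinearMap in
theorem statement12_general (Fo : F →L[ℂ] E) (G : E →L[ℂ] F) (H : F →L[ℂ] F)
    (h4 : (adjoint Fo).comp Fo + (adjoint H).comp H = ContinuousLinearMap.id ℂ F)
    (h8 : G.comp (adjoint G) + H.comp (adjoint H) = ContinuousLinearMap.id ℂ F) :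
    (({w : F | ∃ (u : F) (v : E), w = (u - H u) + G v} = Set.univ) ↔
       ({w : F | ∃ (u : F) (v : E), w = (u - adjoint H u) + adjoint Fo v} = Set.univ)) ∧
    (({w : F | ∃ (u : F) (v : E), w = (u - H u) + G v} = Set.univ) ↔
       Function.Surjective (fun u : F => u - H u)) ∧
    (({w : F | ∃ (u : F) (v : E), w = (u - H u) + G v} = Set.univ) ↔
       Function.Surjective (fun u : F => u - adjoint H u)) := by
  set Coercive := ∃ c > 0, ∀ u : F, c * ‖u‖ ^ 2 ≤ RCLike.re (inner ℂ u (u - H u))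
  have coercive_of_i := exists_re_inner_coercive_of_setOf_sub_add_eq_univ H G h8
  have coercive_of_ii : {w : F | ∃ (u : F) (v : E), w = (u - adjoint H u) + adjoint Fo v} =
      Set.univ → Coercive := fun h => by
    have hF : adjoint Fo ∘L adjoint (adjoint Fo) + adjoint H ∘L adjoint (adjoint H) =
        ContinuousLinearMap.id ℂ F := by
      rwa [adjoint_adjoint, adjoint_adjoint]
    obtain ⟨c, hc, hcu⟩ := exists_re_inner_coercive_of_setOf_sub_add_eq_univ _ _ hF h
    exact ⟨c, hc, fun u => re_inner_sub_adjoint_apply H u ▸ hcu u⟩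
  have iii_of_coercive : Coercive → Function.Surjective (fun u : F => u - H u) :=
    fun ⟨c, hc, hcu⟩ => surjective_sub_of_re_inner_coercive H hc hcu
  have iv_of_coercive : Coercive → Function.Surjective (fun u : F => u - adjoint H u) :=
    fun ⟨c, hc, hcu⟩ => surjective_sub_of_re_inner_coercive (adjoint H) hc
      fun u => (re_inner_sub_adjoint_apply H u).symm ▸ hcu u
  have i_of_iii := setOf_sub_add_eq_univ_of_surjective H G
  have ii_of_iv := setOf_sub_add_eq_univ_of_surjective (adjoint H) (adjoint Fo)
  exact ⟨⟨fun h => ii_of_iv (iv_of_coercive (coercive_of_i h)),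
      fun h => i_of_iii (iii_of_coercive (coercive_of_ii h))⟩,
    ⟨fun h => iii_of_coercive (coercive_of_i h), i_of_iii⟩,
    ⟨fun h => iv_of_coercive (coercive_of_i h),
      fun h => i_of_iii (iii_of_coercive (coercive_of_ii (ii_of_iv h)))⟩⟩

open ContinuousLinearMap in
/-- for a unitary block operator `U = [[T, F], [G, H]]` on `𝔥 ⊕ 𝓗`
(unitarity expressed through the eight block identities of `U*U = I` and `UU* = I`),
the four range conditions are equivalent. -/
theorem statement12 (T : E →L[ℂ] E) (Fo : F →L[ℂ] E) (G : E →L[ℂ] F) (H : F →L[ℂ] F)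
    (h1 : (adjoint T).comp T + (adjoint G).comp G = ContinuousLinearMap.id ℂ E)
    (h2 : (adjoint T).comp Fo + (adjoint G).comp H = 0)
    (h3 : (adjoint Fo).comp T + (adjoint H).comp G = 0)
    (h4 : (adjoint Fo).comp Fo + (adjoint H).comp H = ContinuousLinearMap.id ℂ F)
    (h5 : T.comp (adjoint T) + Fo.comp (adjoint Fo) = ContinuousLinearMap.id ℂ E)
    (h6 : T.comp (adjoint G) + Fo.comp (adjoint H) = 0)
    (h7 : G.comp (adjoint T) + H.comp (adjoint Fo) = 0)
    (h8 : G.comp (adjoint G) + H.comp (adjoint H) = ContinuousLinearMap.id ℂ F) :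
    (({w : F | ∃ (u : F) (v : E), w = (u - H u) + G v} = Set.univ) ↔
       ({w : F | ∃ (u : F) (v : E), w = (u - adjoint H u) + adjoint Fo v} = Set.univ)) ∧
    (({w : F | ∃ (u : F) (v : E), w = (u - H u) + G v} = Set.univ) ↔
       Function.Surjective (fun u : F => u - H u)) ∧
    (({w : F | ∃ (u : F) (v : E), w = (u - H u) + G v} = Set.univ) ↔
       Function.Surjective (fun u : F => u - adjoint H u)) :=
  statement12_general Fo G H h4 h8

end BT
end
end
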